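/- Let C ⊂ ℝⁿ be a compact set, N ∈ ℕ₀, and let p ≠ 0 be a polynomial on ℝⁿ of degree at most N such that K := C ∩ {x : p(x) ≥ 0} is a convex body. Then K is uniquely determined among all convex bodies contained in C by its geometric moments of order at most N: if L is any convex body with L ⊂ C and μ_α(L) = μ_α(K) for all multi-indices α ∈ ℕ₀ⁿ with |α| ≤ N, then L = K. -/

import Mathlib

/-!
Write `f x = p(x)`. Since `deg p ≤ N`, equality of the moments of order `≤ N` gives
`∫_L f = ∫_K f`. Now `f ≥ 0` on `K`, while `f < 0` on `L \ K` because `L ⊆ C`; so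
`∫_{L \ K} f = ∫_{K \ L} f ≥ 0` forces `L \ K` to be null. The zeroth moment gives
`vol L = vol K`, hence `L = K` almost everywhere, and two convex bodies that agree almost
everywhere are equal, as each is the closure of its interior.
-/

open MeasureTheory

/-- The geometric moment `μ_α(K) = ∫_K x^α dx` of a set `K ⊆ ℝⁿ`. -/
noncomputable def geomMoment {n : ℕ} (α : Fin n → ℕ) (K : Set (EuclideanSpace ℝ (Fin n))) : ℝ :=
  ∫ x in K, ∏ i, (x i) ^ (α i)

/-- A convex body: a compact convex set with nonempty interior. -/
def IsConvexBody {n : ℕ} (K : Set (EuclideanSpace ℝ (Fin n))) : Prop :=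
  IsCompact K ∧ Convex ℝ K ∧ (interior K).Nonempty

lemma Convex.subset_of_measure_diff_eq_zero {E : Type*} [NormedAddCommGroup E] [NormedSpace ℝ E]
    [MeasurableSpace E] (μ : Measure E) [μ.IsOpenPosMeasure] {s t : Set E} (hs : Convex ℝ s)
    (hs_int : (interior s).Nonempty) (ht : IsClosed t) (hst : μ (s \ t) = 0) : s ⊆ t := by
  have hint : interior s ⊆ t := by
    have hnull : μ (interior s \ t) = 0 :=
      measure_mono_null (Set.sdiff_subset_sdiff_left interior_subset) hst
    rwa [(isOpen_interior.sdiff ht).measure_eq_zero_iff μ, Set.sdiff_eq_empty] at hnull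
  calc s ⊆ closure s := subset_closure
    _ = closure (interior s) := (hs.closure_interior_eq_closure_of_nonempty_interior hs_int).symm
    _ ⊆ t := closure_minimal hint ht

lemma IsConvexBody.eq_of_ae_eq {n : ℕ} {K L : Set (EuclideanSpace ℝ (Fin n))}
    (hK : IsConvexBody K) (hL : IsConvexBody L) (h : K =ᵐ[volume] L) : K = L :=
  (hK.2.1.subset_of_measure_diff_eq_zero volume hK.2.2 hL.1.isClosed (ae_eq_set.1 h).1).antisymm
    (hL.2.1.subset_of_measure_diff_eq_zero volume hL.2.2 hK.1.isClosed (ae_eq_set.1 h).2)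

lemma continuous_eval_euclideanSpace {n : ℕ} (p : MvPolynomial (Fin n) ℝ) :
    Continuous fun x : EuclideanSpace ℝ (Fin n) => MvPolynomial.eval (fun i => x i) p :=
  p.continuous_eval.comp (PiLp.continuous_ofLp 2 _)

lemma setIntegral_eval_eq_sum_coeff_mul_geomMoment {n : ℕ} (p : MvPolynomial (Fin n) ℝ)
    {S : Set (EuclideanSpace ℝ (Fin n))} (hS : IsCompact S) :
    ∫ x in S, MvPolynomial.eval (fun i => x i) p =
      ∑ d ∈ p.support, MvPolynomial.coeff d p * geomMoment d S := by
  simp_rw [MvPolynomial.eval_eq']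
  rw [integral_finsetSum]
  · simp_rw [geomMoment, integral_const_mul]
  · intro d _
    have hcont : Continuous fun x : EuclideanSpace ℝ (Fin n) =>
        MvPolynomial.coeff d p * ∏ i, x i ^ d i := by
      fun_prop
    exact hcont.continuousOn.integrableOn_compact hS

lemma geomMoment_zero {n : ℕ} (K : Set (EuclideanSpace ℝ (Fin n))) :
    geomMoment 0 K = volume.real K := by
  simp [geomMoment]

lemma measure_diff_eq_zero_of_setIntegral_eq {α : Type*} [MeasurableSpace α] {μ : Measure α}
    {f : α → ℝ} {s t : Set α} (hs : MeasurableSet s) (ht : MeasurableSet t)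
    (hfs : IntegrableOn f s μ) (hft : IntegrableOn f t μ) (hf_nonneg : ∀ x ∈ s, 0 ≤ f x)
    (hf_neg : ∀ x ∈ t \ s, f x < 0) (heq : ∫ x in t, f x ∂μ = ∫ x in s, f x ∂μ) :
    μ (t \ s) = 0 := by
  have hts : MeasurableSet (t \ s) := ht.diff hs
  have hle : ∫ x in t ∩ s, f x ∂μ ≤ ∫ x in s, f x ∂μ :=
    setIntegral_mono_set hfs ((ae_restrict_iff' hs).2 (.of_forall hf_nonneg))
      (.of_forall Set.inter_subset_right)
  have hsplit := integral_inter_add_sdiff (f := f) hs hft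
  have hneg_nonneg : 0 ≤ᵐ[μ.restrict (t \ s)] fun x => -f x :=
    (ae_restrict_iff' hts).2 (.of_forall fun x hx => (neg_pos.2 (hf_neg x hx)).le)
  have hzero : ∫ x in t \ s, -f x ∂μ = 0 := by
    refine le_antisymm ?_ (integral_nonneg_of_ae hneg_nonneg)
    rw [integral_neg]
    linarith
  have hvanish : (fun x => -f x) =ᵐ[μ.restrict (t \ s)] 0 :=
    (setIntegral_eq_zero_iff_of_nonneg_ae hneg_nonneg (hft.mono_set Set.sdiff_subset).neg).1 hzero
  have hfalse : ∀ᵐ x ∂μ.restrict (t \ s), False := by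
    filter_upwards [hvanish, ae_restrict_mem hts] with x hx hmem
    exact (neg_pos.2 (hf_neg x hmem)).ne' hx
  exact Measure.restrict_eq_zero.1 (ae_eq_bot.1 (Filter.eventually_false_iff_eq_bot.1 hfalse))

lemma setIntegral_eval_eq_of_geomMoment_eq {n N : ℕ} {p : MvPolynomial (Fin n) ℝ}
    (hdeg : p.totalDegree ≤ N) {S T : Set (EuclideanSpace ℝ (Fin n))} (hS : IsCompact S)
    (hT : IsCompact T)
    (hmom : ∀ α : Fin n → ℕ, ∑ i, α i ≤ N → geomMoment α S = geomMoment α T) :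
    ∫ x in S, MvPolynomial.eval (fun i => x i) p =
      ∫ x in T, MvPolynomial.eval (fun i => x i) p := by
  rw [setIntegral_eval_eq_sum_coeff_mul_geomMoment p hS,
    setIntegral_eval_eq_sum_coeff_mul_geomMoment p hT]
  refine Finset.sum_congr rfl fun d hd => ?_
  have hdN : ∑ i, d i ≤ N := by
    simpa [Finsupp.sum_fintype] using (MvPolynomial.le_totalDegree hd).trans hdeg
  rw [hmom d hdN]

theorem uniqueness_of_semialgebraic_body_general {n : ℕ} (C : Set (EuclideanSpace ℝ (Fin n)))
    (N : ℕ) (p : MvPolynomial (Fin n) ℝ)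
    (hdeg : p.totalDegree ≤ N) (K : Set (EuclideanSpace ℝ (Fin n)))
    (hKdef : K = C ∩ {x | 0 ≤ MvPolynomial.eval (fun i => x i) p})
    (hK : IsConvexBody K)
    (L : Set (EuclideanSpace ℝ (Fin n))) (hL : IsConvexBody L) (hLC : L ⊆ C)
    (hmom : ∀ α : Fin n → ℕ, (∑ i, α i) ≤ N → geomMoment α L = geomMoment α K) :
    L = K := by
  have hf := continuous_eval_euclideanSpace p
  have hf_nonneg : ∀ x ∈ K, 0 ≤ MvPolynomial.eval (fun i => x i) p := by
    rw [hKdef]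
    exact fun x hx => hx.2
  have hf_neg : ∀ x ∈ L \ K, MvPolynomial.eval (fun i => x i) p < 0 := by
    rw [hKdef]
    exact fun x ⟨hxL, hxK⟩ => not_le.1 fun h => hxK ⟨hLC hxL, h⟩
  have hLK : volume (L \ K) = 0 :=
    measure_diff_eq_zero_of_setIntegral_eq hK.1.measurableSet hL.1.measurableSet
      (hf.continuousOn.integrableOn_compact hK.1) (hf.continuousOn.integrableOn_compact hL.1)
      hf_nonneg hf_neg (setIntegral_eval_eq_of_geomMoment_eq hdeg hL.1 hK.1 hmom)
  have hvol : volume L = volume K := by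
    have h0 := hmom 0 (by simp)
    rwa [geomMoment_zero, geomMoment_zero,
      measureReal_eq_measureReal_iff hL.1.measure_ne_top hK.1.measure_ne_top] at h0
  exact hL.eq_of_ae_eq hK (ae_eq_of_ae_subset_of_measure_ge (ae_le_set.2 hLK) hvol.ge
    hL.1.measurableSet.nullMeasurableSet hK.1.measure_ne_top)

/-- If `K = C ∩ {p ≥ 0}` for a compact set `C` and a nonzero polynomial `p`
of degree at most `N`, and `K` is a convex body, then `K` is uniquely determined among all
convex bodies contained in `C` by its geometric moments of order at most `N`. -/
theorem uniqueness_of_semialgebraic_body {n : ℕ} (C : Set (EuclideanSpace ℝ (Fin n)))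
    (hC : IsCompact C) (N : ℕ) (p : MvPolynomial (Fin n) ℝ) (hp : p ≠ 0)
    (hdeg : p.totalDegree ≤ N) (K : Set (EuclideanSpace ℝ (Fin n)))
    (hKdef : K = C ∩ {x | 0 ≤ MvPolynomial.eval (fun i => x i) p})
    (hK : IsConvexBody K)
    (L : Set (EuclideanSpace ℝ (Fin n))) (hL : IsConvexBody L) (hLC : L ⊆ C)
    (hmom : ∀ α : Fin n → ℕ, (∑ i, α i) ≤ N → geomMoment α L = geomMoment α K) :
    L = K :=
  uniqueness_of_semialgebraic_body_general C N p hdeg K hKdef hK L hL hLC hmom
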